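/- arXiv:2205.01153 — 3 statements merged into one kernel-verified Lean document; each statement's English description precedes it below -/
import Mathlib

section
/- Let R be a Noetherian ring, let I ⊆ R be an ideal, let n ≥ 1 be an integer, and let W = R − ⋃_{p ∈ Ass_R(R/I)} p be the complement of the union of the associated primes of R/I. Then the preimage in R of I^n R_W under the localization map R → R_W equals the intersection ⋂_{p ∈ Ass_R(R/I)} (preimage in R of I^n R_p under the localization map R → R_p). -/
open Ideal IsLocalRing

/-- The multiplicative set `W = R − ⋃_{p ∈ Ass_R(R/I)} p`, the complement of the union of the
associated primes of `R/I`. -/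
def assPrimesCompl {R : Type*} [CommRing R] (I : Ideal R) : Submonoid R where
  carrier := {x : R | ∀ p ∈ associatedPrimes R (R ⧸ I), x ∉ p}
  mul_mem' := by
    intro a b ha hb p hp hab
    rcases hp.isPrime.mem_or_mem hab with h | h
    · exact ha p hp h
    · exact hb p hp h
  one_mem' := fun p hp h => hp.isPrime.ne_top ((Ideal.eq_top_iff_one _).mpr h)

/-- The `n`-th symbolic power `I⁽ⁿ⁾ = IⁿR_W ∩ R`, i.e. the preimage in `R` of `Iⁿ R_W` under the
localization map `R → R_W`, where `W` is the complement of the union of the associated primes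
of `R/I`. -/
noncomputable def symbolicPower {R : Type*} [CommRing R] (I : Ideal R) (n : ℕ) : Ideal R :=
  (Ideal.map (algebraMap R (Localization (assPrimesCompl I))) (I ^ n)).comap
    (algebraMap R (Localization (assPrimesCompl I)))

/-- The preimage in `R` of `Iⁿ R_p` under the localization map `R → R_p`, for `p` a prime. -/
noncomputable def localPower {R : Type*} [CommRing R] (I : Ideal R) (n : ℕ) (p : Ideal R)
    (hp : p.IsPrime) : Ideal R :=
  letI := hp
  (Ideal.map (algebraMap R (Localization.AtPrime p)) (I ^ n)).comap
    (algebraMap R (Localization.AtPrime p))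

section

variable {R : Type*} [CommRing R]

theorem Ideal.exists_forall_notMem_mul_mem {S : Set (Ideal R)} (hS : S.Finite)
    (hprime : ∀ p ∈ S, p.IsPrime) {J : Ideal R} {x : R} (h : ∀ p ∈ S, ∃ s ∉ p, s * x ∈ J) :
    ∃ w, (∀ p ∈ S, w ∉ p) ∧ w * x ∈ J := by
  by_contra! hcon
  -- prime avoidance, applied to the colon ideal `J : x`
  have hcolon : ((J.colon {x} : Ideal R) : Set R) ⊆ ⋃ p ∈ S, (p : Set R) := by
    intro w hw
    by_contra hw'
    simp only [Set.mem_iUnion, not_exists] at hw'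
    exact hcon w hw' (by simpa using Submodule.mem_colon_singleton.mp hw)
  obtain ⟨p, hp, hle⟩ :=
    (Ideal.subset_union_prime_finite hS (f := id) ⊥ ⊥ fun p hp _ _ => hprime p hp).mp hcolon
  obtain ⟨s, hs, hsx⟩ := h p hp
  exact hs (hle (Submodule.mem_colon_singleton.mpr (by simpa using hsx)))

theorem mem_symbolicPower_iff {I : Ideal R} {n : ℕ} {x : R} :
    x ∈ symbolicPower I n ↔ ∃ w ∈ assPrimesCompl I, w * x ∈ I ^ n :=
  IsLocalization.algebraMap_mem_map_algebraMap_iff _ _ _ _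

theorem mem_localPower_iff {I : Ideal R} {n : ℕ} {p : Ideal R} {hp : p.IsPrime} {x : R} :
    x ∈ localPower I n p hp ↔ ∃ s ∉ p, s * x ∈ I ^ n :=
  IsLocalization.algebraMap_mem_map_algebraMap_iff p.primeCompl _ _ _

end

theorem stmt0_general {R : Type*} [CommRing R] [IsNoetherianRing R] (I : Ideal R) (n : ℕ) :
    symbolicPower I n =
      ⨅ (p : Ideal R) (hp : p ∈ associatedPrimes R (R ⧸ I)), localPower I n p hp.isPrime := by
  ext x
  simp only [Submodule.mem_iInf, mem_symbolicPower_iff, mem_localPower_iff]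
  constructor
  · rintro ⟨w, hw, hwx⟩ p hp
    exact ⟨w, hw p hp, hwx⟩
  · exact Ideal.exists_forall_notMem_mul_mem (associatedPrimes.finite R _)
      fun p hp => hp.isPrime

theorem stmt0 {R : Type*} [CommRing R] [IsNoetherianRing R] (I : Ideal R) (n : ℕ) (hn : 1 ≤ n) :
    symbolicPower I n =
      ⨅ (p : Ideal R) (hp : p ∈ associatedPrimes R (R ⧸ I)), localPower I n p hp.isPrime :=
  stmt0_general I n
end

section
/- Let (R, m) be a complete Noetherian local domain, let I ⊆ R be an ideal, let M ≥ 1 and h ≥ 1 and n ≥ 1 be integers, let s_1, …, s_n be non-negative integers, and let u ∈ I^{(M)}. Assume that for every associated prime p of R/I there exists an ideal J ⊆ I generated by at most h elements such that J R_p is a reduction of I R_p. Let v be an element of an algebraic closure of Frac(R) with v^M = u, and let R' be the integral closure of R[v] in Frac(R)(v). Let cl be a closure operation on the ideals of R' satisfying extension, order-preservation, and the Briançon–Skoda axiom. Then for every associated prime p_ℓ of R/I there exists c_ℓ ∈ R − p_ℓ such that for every i = 1, …, n one has c_ℓ·v^{s_i+h} ∈ (I^{s_i+1}R')^{cl}.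 -/
set_option synthInstance.maxHeartbeats 1000000
set_option maxHeartbeats 2000000

open Ideal IsLocalRing

/-- `J` is a reduction of `I` if `J ⊆ I` and `I^(m+1) = J·I^m` for some `m ≥ 0`. -/
def Ideal.IsReduction {S : Type*} [CommRing S] (J I : Ideal S) : Prop :=
  J ≤ I ∧ ∃ m : ℕ, I ^ (m + 1) = J * I ^ m

/-- `J R_p` is a reduction of `I R_p` in the localization of `R` at the prime `p`. -/
def isReductionAt {R : Type*} [CommRing R] (p : Ideal R) (hp : p.IsPrime) (J I : Ideal R) :
    Prop :=
  letI := hp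
  Ideal.IsReduction (Ideal.map (algebraMap R (Localization.AtPrime p)) J)
    (Ideal.map (algebraMap R (Localization.AtPrime p)) I)

/-- The integral closure of an ideal `J`: the set of elements `x` satisfying an equation
`x^n + a_1 x^(n-1) + ⋯ + a_n = 0` with `a_i ∈ J^i` for some `n ≥ 1`. -/
def Ideal.integralClosureSet {S : Type*} [CommRing S] (J : Ideal S) : Set S :=
  {x | ∃ n : ℕ, 0 < n ∧ ∃ a : ℕ → S, (∀ i, 1 ≤ i → i ≤ n → a i ∈ J ^ i) ∧
    x ^ n + ∑ i ∈ Finset.range n, a (i + 1) * x ^ (n - (i + 1)) = 0}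

/-!
Let `c₁ ∉ p` with `c₁ u ∈ I^M` (from `u ∈ I^(M)`) and `c₂ ∉ p` with `c₂ I^(m+1) ⊆ J I^m` (from
the reduction at `p`), and put `y = (c₁ c₂)^e w^e`. Giving `w` and `I` degree one, `y` maps the
finitely generated ideal `N = Σ_{j<M} I^(m+M-j) w^j R'` into `(JR')^e N`: write
`w^(e+j) = u^q w^r` with `r < M`, absorb `u^q` into a power of `I` using `c₁`, then trade `I^e`
for `J^e` using `c₂`. The determinant trick makes `y` integral over `(JR')^e`, so for
`e = s_i + h` the Briançon–Skoda axiom puts `y` in `(J^(s_i+1)R')^cl ⊆ (I^(s_i+1)R')^cl`.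
-/

theorem IsLocalization.exists_mem_span_singleton_mul_le_of_map_le {R S : Type*} [CommRing R]
    [CommRing S] [Algebra R S] (P : Submonoid R) [IsLocalization P S] {B C : Ideal R}
    (hB : B.FG) (h : B.map (algebraMap R S) ≤ C.map (algebraMap R S)) :
    ∃ c ∈ P, Ideal.span {c} * B ≤ C := by
  induction B, hB using Submodule.fg_induction with
  | singleton x =>
    rw [Ideal.submodule_span_eq, Ideal.map_span, Set.image_singleton,
      Ideal.span_singleton_le_iff_mem, algebraMap_mem_map_algebraMap_iff P] at h
    obtain ⟨c, hc, hcx⟩ := h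
    exact ⟨c, hc, by rwa [Ideal.submodule_span_eq, Ideal.span_singleton_mul_span_singleton,
      Ideal.span_singleton_le_iff_mem]⟩
  | sup B₁ B₂ _ _ ih₁ ih₂ =>
    rw [Ideal.map_sup, sup_le_iff] at h
    obtain ⟨c₁, hc₁, h₁⟩ := ih₁ h.1
    obtain ⟨c₂, hc₂, h₂⟩ := ih₂ h.2
    refine ⟨c₁ * c₂, P.mul_mem hc₁ hc₂, ?_⟩
    rw [← Ideal.span_singleton_mul_span_singleton, Ideal.mul_sup]
    refine sup_le ?_ ?_
    · calc _ = Ideal.span {c₂} * (Ideal.span {c₁} * B₁) := by ring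
        _ ≤ Ideal.span {c₁} * B₁ := Ideal.mul_le_right
        _ ≤ C := h₁
    · calc _ = Ideal.span {c₁} * (Ideal.span {c₂} * B₂) := by ring
        _ ≤ Ideal.span {c₂} * B₂ := Ideal.mul_le_right
        _ ≤ C := h₂

theorem exists_mul_mem_pow_of_mem_symbolicPower {R : Type*} [CommRing R] {I : Ideal R} {M : ℕ}
    {u : R} (hu : u ∈ symbolicPower I M) : ∃ c ∈ assPrimesCompl I, c * u ∈ I ^ M :=
  (IsLocalization.algebraMap_mem_map_algebraMap_iff _ (Localization (assPrimesCompl I)) _ _).mp hu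

theorem exists_span_singleton_mul_le_of_isReductionAt {R : Type*} [CommRing R]
    [IsNoetherianRing R] {p : Ideal R} (hp : p.IsPrime) {I J : Ideal R}
    (h : isReductionAt p hp J I) : ∃ c ∉ p, ∃ m, span {c} * I ^ (m + 1) ≤ J * I ^ m := by
  obtain ⟨-, m, hm⟩ := h
  obtain ⟨c, hc, hcI⟩ := IsLocalization.exists_mem_span_singleton_mul_le_of_map_le p.primeCompl
    (S := Localization.AtPrime p) (I ^ (m + 1)).fg_of_isNoetherianRing
    (by rw [Ideal.map_mul, Ideal.map_pow, Ideal.map_pow, hm] : _ ≤ (J * I ^ m).map _)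
  exact ⟨c, hc, m, hcI⟩

namespace Ideal

section IntegralClosure

variable {S : Type*} [CommRing S]

open Polynomial in
theorem mem_integralClosureSet_of_monic [Nontrivial S] {Q : Ideal S} {y : S} {p : S[X]}
    (hp : p.Monic) (hcoeff : ∀ k, p.coeff k ∈ Q ^ (p.natDegree - k)) (hy : p.eval y = 0) :
    y ∈ Q.integralClosureSet := by
  set d := p.natDegree
  have hd : 0 < d := by
    refine Nat.pos_of_ne_zero fun h0 => ?_
    rw [(hp.natDegree_eq_zero).mp h0, eval_one] at hy
    exact one_ne_zero hy
  refine ⟨d, hd, fun i => p.coeff (d - i), fun i _ hi => ?_, ?_⟩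
  · simpa [Nat.sub_sub_self hi] using hcoeff (d - i)
  · rw [eval_eq_sum_range, Finset.sum_range_succ, hp.coeff_natDegree, one_mul] at hy
    rw [← hy, add_comm, ← Finset.sum_range_reflect]
    refine congrArg (· + _) (Finset.sum_congr rfl fun i hi => ?_)
    rw [Finset.mem_range] at hi
    simp only [show d - (d - 1 - i + 1) = i by omega]

theorem mem_integralClosureSet_of_isNilpotent (Q : Ideal S) {y : S} (hy : IsNilpotent y) :
    y ∈ Q.integralClosureSet := by
  obtain ⟨n, hn⟩ := hy
  exact ⟨n + 1, n.succ_pos, 0, fun i _ _ => by simp, by simp [pow_succ, hn]⟩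

theorem mem_integralClosureSet_of_span_singleton_mul_le [IsDomain S] {Q N : Ideal S}
    (hN : N.FG) (hN0 : N ≠ ⊥) {y : S} (hy : span {y} * N ≤ Q * N) : y ∈ Q.integralClosureSet := by
  have : Module.Finite S N := Module.Finite.iff_fg.mpr hN
  let f : Module.End S N := algebraMap S (Module.End S N) y
  have hf : LinearMap.range f ≤ Q • ⊤ := by
    rintro _ ⟨x, rfl⟩
    rw [Submodule.mem_smul_top_iff]
    exact span_singleton_mul_le_iff.mp hy x x.2
  obtain ⟨p, hp, -, hcoeff, hpf⟩ :=
    LinearMap.exists_monic_and_natDegree_eq_and_coeff_mem_pow_and_aeval_eq_zero S f Q hf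
  refine mem_integralClosureSet_of_monic hp hcoeff ?_
  obtain ⟨x, hxN, hx0⟩ := Submodule.exists_mem_ne_zero_of_ne_bot hN0
  have hpx : p.eval y * x = 0 := by
    have := congrArg (fun g : Module.End S N => (g ⟨x, hxN⟩ : S)) hpf
    simpa [f, Polynomial.aeval_algebraMap_apply] using this
  exact (mul_eq_zero.mp hpx).resolve_right hx0

end IntegralClosure

variable {R B : Type*} [CommRing R] [CommRing B] (φ : R →+* B)

theorem span_singleton_pow_mul_pow_le {I J : Ideal R} {c : R} {m : ℕ}
    (h : span {c} * I ^ (m + 1) ≤ J * I ^ m) (k : ℕ) :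
    span {c} ^ k * I ^ (m + k) ≤ J ^ k * I ^ m := by
  induction k with
  | zero => simp
  | succ k ih =>
    calc span {c} ^ (k + 1) * I ^ (m + (k + 1))
        = span {c} ^ k * I ^ k * (span {c} * I ^ (m + 1)) := by ring
      _ ≤ span {c} ^ k * I ^ k * (J * I ^ m) := by gcongr
      _ = J * (span {c} ^ k * I ^ (m + k)) := by ring
      _ ≤ J * (J ^ k * I ^ m) := by gcongr
      _ = J ^ (k + 1) * I ^ m := by ring

theorem map_mul_span_singleton_le_iff {I : Ideal R} {z : B} {K : Ideal B} :
    I.map φ * span {z} ≤ K ↔ ∀ a ∈ I, φ a * z ∈ K := by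
  refine ⟨fun h a ha => h (mul_mem_mul (mem_map_of_mem φ ha) (mem_span_singleton_self z)),
    fun h => ?_⟩
  have hcolon : I.map φ ≤ K.colon {z} := map_le_iff_le_comap.mpr fun a ha => by
    simpa [Submodule.mem_colon_singleton] using h a ha
  rw [mul_comm, span_singleton_mul_le_iff]
  intro x hx
  simpa [Submodule.mem_colon_singleton, mul_comm] using hcolon hx

/-- If `w` and the elements of `I` are given degree one, this is the ideal generated by the
elements `φ a * w ^ j` of degree `k` with `j < M`. -/
def twistedPow (I : Ideal R) (w : B) (M k : ℕ) : Ideal B :=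
  ∑ j ∈ Finset.range M, (I ^ (k - j)).map φ * span {w ^ j}

theorem map_pow_mul_span_singleton_le_twistedPow (I : Ideal R) (w : B) {M j : ℕ} (hj : j < M)
    (k : ℕ) : (I ^ (k - j)).map φ * span {w ^ j} ≤ twistedPow φ I w M k :=
  Finset.single_le_sum (f := fun j => (I ^ (k - j)).map φ * span {w ^ j})
    (fun _ _ => bot_le) (Finset.mem_range.mpr hj)

theorem twistedPow_fg [IsNoetherianRing R] (I : Ideal R) (w : B) (M k : ℕ) :
    (twistedPow φ I w M k).FG := by
  refine Finset.sum_induction _ FG (fun _ _ h₁ h₂ => Submodule.FG.sup h₁ h₂) Submodule.fg_bot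
    fun j _ => ?_
  exact (((I ^ (k - j)).fg_of_isNoetherianRing).map φ).mul (Submodule.fg_span_singleton _)

theorem twistedPow_ne_bot [IsDomain R] (hφ : Function.Injective φ) {I : Ideal R} (hI : I ≠ ⊥)
    (w : B) {M : ℕ} (hM : 0 < M) (k : ℕ) : twistedPow φ I w M k ≠ ⊥ := by
  obtain ⟨x, hxI, hx0⟩ := Submodule.exists_mem_ne_zero_of_ne_bot hI
  have hmem : φ (x ^ k) * w ^ 0 ∈ twistedPow φ I w M k :=
    map_pow_mul_span_singleton_le_twistedPow φ I w hM k
      (mul_mem_mul (mem_map_of_mem φ (pow_mem_pow hxI k)) (mem_span_singleton_self _))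
  refine fun hbot => pow_ne_zero k hx0 (hφ ?_)
  simpa [hbot] using hmem

section Reduction

variable {I J : Ideal R} {M m : ℕ} {u c₁ c₂ : R} {w : B}

theorem map_mul_pow_mem_map_pow_mul_twistedPow (hM : 0 < M) (hc₁ : c₁ * u ∈ I ^ M)
    (hc₂ : span {c₂} * I ^ (m + 1) ≤ J * I ^ m) (hw : w ^ M = φ u) (e : ℕ) {j : ℕ}
    (hj : j ≤ M) {x : R} (hx : x ∈ I ^ (m + M - j)) :
    φ (c₁ ^ ((e + j) / M) * c₂ ^ e * x) * w ^ (e + j) ∈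
      J.map φ ^ e * twistedPow φ I w M (m + M) := by
  set q := (e + j) / M
  set r := (e + j) % M
  have hqr : M * q + r = e + j := Nat.div_add_mod _ _
  have hr : r < M := Nat.mod_lt _ hM
  have hw' : w ^ (e + j) = φ (u ^ q) * w ^ r := by
    rw [← hqr, pow_add, pow_mul, hw, map_pow]
  have hIpow : (c₁ * u) ^ q * x ∈ I ^ (m + e) * I ^ (M - r) := by
    rw [← pow_add, show m + e + (M - r) = M * q + (m + M - j) by omega, pow_add, pow_mul]
    exact mul_mem_mul (pow_mem_pow hc₁ q) hx
  have hJI : c₂ ^ e * ((c₁ * u) ^ q * x) ∈ J ^ e * I ^ (m + M - r) := by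
    have h := mul_mem_mul (pow_mem_pow (mem_span_singleton_self c₂) e) hIpow
    rw [← mul_assoc] at h
    have hle : span {c₂} ^ e * I ^ (m + e) * I ^ (M - r) ≤ J ^ e * I ^ (m + M - r) :=
      calc _ ≤ J ^ e * I ^ m * I ^ (M - r) := by
            gcongr ?_ * _
            exact span_singleton_pow_mul_pow_le hc₂ e
        _ = _ := by rw [mul_assoc, ← pow_add, show m + (M - r) = m + M - r by omega]
    exact hle h
  have hle : (J ^ e * I ^ (m + M - r)).map φ * span {w ^ r} ≤
      J.map φ ^ e * twistedPow φ I w M (m + M) := by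
    rw [Ideal.map_mul, Ideal.map_pow, mul_assoc]
    gcongr
    exact map_pow_mul_span_singleton_le_twistedPow φ I w hr _
  convert hle (mul_mem_mul (mem_map_of_mem φ hJI) (mem_span_singleton_self _)) using 1
  rw [hw', mul_pow]
  simp only [map_mul, map_pow]
  ring

theorem span_singleton_mul_twistedPow_le (hM : 0 < M) (hc₁ : c₁ * u ∈ I ^ M)
    (hc₂ : span {c₂} * I ^ (m + 1) ≤ J * I ^ m) (hw : w ^ M = φ u) (e : ℕ) :
    span {φ ((c₁ * c₂) ^ e) * w ^ e} * twistedPow φ I w M (m + M) ≤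
      J.map φ ^ e * twistedPow φ I w M (m + M) := by
  rw [twistedPow, Finset.mul_sum, sum_eq_sup, Finset.sup_le_iff]
  intro j hj
  rw [Finset.mem_range] at hj
  rw [mul_left_comm, span_singleton_mul_span_singleton, map_mul_span_singleton_le_iff]
  intro x hx
  have hq : (e + j) / M ≤ e :=
    Nat.lt_succ_iff.mp ((Nat.div_lt_iff_lt_mul hM).mpr (by nlinarith))
  have hc : (c₁ * c₂) ^ e = c₁ ^ (e - (e + j) / M) * (c₁ ^ ((e + j) / M) * c₂ ^ e) := by
    rw [mul_pow, ← mul_assoc, ← pow_add, Nat.sub_add_cancel hq]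
  have hmem := map_mul_pow_mem_map_pow_mul_twistedPow φ hM hc₁ hc₂ hw e hj.le hx
  have hsplit : φ x * (φ ((c₁ * c₂) ^ e) * w ^ e * w ^ j) =
      φ (c₁ ^ (e - (e + j) / M)) * (φ (c₁ ^ ((e + j) / M) * c₂ ^ e * x) * w ^ (e + j)) := by
    rw [hc, pow_add]
    simp only [map_mul]
    ring
  rw [hsplit]
  exact mul_mem_left _ _ hmem

theorem map_mul_pow_mem_integralClosureSet [IsNoetherianRing R] [IsDomain R] [IsDomain B]
    (hφ : Function.Injective φ) (hM : 0 < M) (hc₁₀ : c₁ ≠ 0) (hc₁ : c₁ * u ∈ I ^ M)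
    (hc₂ : span {c₂} * I ^ (m + 1) ≤ J * I ^ m) (hw : w ^ M = φ u) {e : ℕ} (he : 0 < e) :
    φ ((c₁ * c₂) ^ e) * w ^ e ∈ (J.map φ ^ e).integralClosureSet := by
  rcases eq_or_ne I ⊥ with rfl | hI
  · rw [← zero_eq_bot, zero_pow hM.ne', zero_eq_bot, mem_bot, mul_eq_zero] at hc₁
    have hu : u = 0 := hc₁.resolve_left hc₁₀
    refine mem_integralClosureSet_of_isNilpotent _ ⟨M, ?_⟩
    rw [mul_pow, ← pow_mul, mul_comm e M, pow_mul, hw, hu, map_zero, zero_pow he.ne', mul_zero]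
  · exact mem_integralClosureSet_of_span_singleton_mul_le (twistedPow_fg φ I w M (m + M))
      (twistedPow_ne_bot φ hφ hI w hM (m + M))
      (span_singleton_mul_twistedPow_le φ hM hc₁ hc₂ hw e)

end Reduction

end Ideal

theorem stmt9_general {R : Type*} [CommRing R] [IsDomain R] [IsNoetherianRing R]
    (I : Ideal R) (M h n : ℕ) (hM : 1 ≤ M) (hh : 1 ≤ h) (s : Fin n → ℕ)
    (u : R) (hu : u ∈ symbolicPower I M)
    (hred : ∀ p, ∀ hp : p ∈ associatedPrimes R (R ⧸ I), ∃ J : Ideal R, J ≤ I ∧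
      (∃ t : Finset R, t.card ≤ h ∧ Ideal.span (t : Set R) = J) ∧
      isReductionAt p hp.isPrime J I)
    (v : AlgebraicClosure (FractionRing R))
    (hv : v ^ M = algebraMap R (AlgebraicClosure (FractionRing R)) u)
    (L : IntermediateField (FractionRing R) (AlgebraicClosure (FractionRing R)))
    (v' : L) (hv' : (v' : AlgebraicClosure (FractionRing R)) = v)
    (R' : Subalgebra R L)
    (w : R') (hw : (w : L) = v')
    (cl : Ideal R' → Ideal R')
    (horder : ∀ J J' : Ideal R', J ≤ J' → cl J ≤ cl J')
    (hBS : ∀ h' : ℕ, 1 ≤ h' → ∀ J : Ideal R',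
      (∃ t : Finset R', t.card ≤ h' ∧ Ideal.span (t : Set R') = J) →
      ∀ k : ℕ, (J ^ (h' + k)).integralClosureSet ⊆ (cl (J ^ (k + 1)) : Set R')) :
    ∀ p, p ∈ associatedPrimes R (R ⧸ I) → ∃ c : R, c ∉ p ∧
      ∀ i : Fin n, algebraMap R R' c * w ^ (s i + h) ∈
        cl (Ideal.map (algebraMap R R') (I ^ (s i + 1))) := by
  classical
  intro p hp
  have hφ : Function.Injective (algebraMap R R') := fun _ _ hab =>
    IsFractionRing.injective R (FractionRing R)
      ((algebraMap (FractionRing R) L).injective (congrArg Subtype.val hab))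
  have hwM : w ^ M = algebraMap R R' u := by
    apply Subtype.ext
    apply Subtype.ext
    simp [hw, hv', hv]
    rfl
  obtain ⟨c₁, hc₁, hc₁u⟩ := exists_mul_mem_pow_of_mem_symbolicPower hu
  obtain ⟨J, hJI, ⟨t, htcard, rfl⟩, hJ⟩ := hred p hp
  obtain ⟨c₂, hc₂, m, hc₂I⟩ := exists_span_singleton_mul_le_of_isReductionAt hp.isPrime hJ
  set S := h + Finset.univ.sup s
  refine ⟨(c₁ * c₂) ^ S, fun hmem => hp.isPrime.mul_notMem (hc₁ p hp) hc₂
    (hp.isPrime.mem_of_pow_mem _ hmem), fun i => ?_⟩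
  obtain ⟨d, hd⟩ : ∃ d, S = d + (s i + h) :=
    Nat.exists_eq_add_of_le' (by have := Finset.le_sup (f := s) (Finset.mem_univ i); omega)
  have hint := map_mul_pow_mem_integralClosureSet (algebraMap R R') hφ hM
    (fun h0 => hc₁ p hp (by rw [h0]; exact p.zero_mem)) hc₁u hc₂I hwM (e := s i + h) (by omega)
  have hcl := hBS h hh _ ⟨t.image (algebraMap R R'), Finset.card_image_le.trans htcard,
    by rw [Finset.coe_image, ← Ideal.map_span]⟩ (s i) (by rwa [add_comm h])
  have hmono : cl ((span (t : Set R)).map (algebraMap R R') ^ (s i + 1)) ≤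
      cl ((I ^ (s i + 1)).map (algebraMap R R')) :=
    horder _ _ (by rw [← Ideal.map_pow]; exact map_mono (pow_right_mono hJI _))
  rw [hd, pow_add (c₁ * c₂), _root_.map_mul, mul_assoc]
  exact mul_mem_left _ _ (hmono hcl)

theorem stmt9 {R : Type*} [CommRing R] [IsDomain R] [IsNoetherianRing R] [IsLocalRing R]
    [IsAdicComplete (maximalIdeal R) R]
    (I : Ideal R) (M h n : ℕ) (hM : 1 ≤ M) (hh : 1 ≤ h) (hn : 1 ≤ n) (s : Fin n → ℕ)
    (u : R) (hu : u ∈ symbolicPower I M)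
    (hred : ∀ p, ∀ hp : p ∈ associatedPrimes R (R ⧸ I), ∃ J : Ideal R, J ≤ I ∧
      (∃ t : Finset R, t.card ≤ h ∧ Ideal.span (t : Set R) = J) ∧
      isReductionAt p hp.isPrime J I)
    (v : AlgebraicClosure (FractionRing R))
    (hv : v ^ M = algebraMap R (AlgebraicClosure (FractionRing R)) u)
    (L : IntermediateField (FractionRing R) (AlgebraicClosure (FractionRing R)))
    (hL : L = IntermediateField.adjoin (FractionRing R) {v})
    (v' : L) (hv' : (v' : AlgebraicClosure (FractionRing R)) = v)
    (R' : Subalgebra R L)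
    (hR' : R' = (integralClosure (Algebra.adjoin R {v'}) L).restrictScalars R)
    (w : R') (hw : (w : L) = v')
    (cl : Ideal R' → Ideal R')
    (hext : ∀ J : Ideal R', J ≤ cl J)
    (horder : ∀ J J' : Ideal R', J ≤ J' → cl J ≤ cl J')
    (hBS : ∀ h' : ℕ, 1 ≤ h' → ∀ J : Ideal R',
      (∃ t : Finset R', t.card ≤ h' ∧ Ideal.span (t : Set R') = J) →
      ∀ k : ℕ, (J ^ (h' + k)).integralClosureSet ⊆ (cl (J ^ (k + 1)) : Set R')) :
    ∀ p, p ∈ associatedPrimes R (R ⧸ I) → ∃ c : R, c ∉ p ∧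
      ∀ i : Fin n, algebraMap R R' c * w ^ (s i + h) ∈
        cl (Ideal.map (algebraMap R R') (I ^ (s i + 1))) :=
  stmt9_general I M h n hM hh s u hu hred v hv L v' hv' R' w hw cl horder hBS
end

section
/- Let (R, m) be a complete Noetherian local ring and let B be an R-algebra such that the structure map R → B is faithfully flat. Then R → B splits as a map of R-modules; that is, there exists an R-linear map φ : B → R with φ(1_B) = 1_R. -/
/-!
Lift a basis of `B ⧸ 𝔪B` over the residue field to a family `x` in `B` with `x i₀ = 1`
(possible because `1 ∉ 𝔪B` by faithful flatness). Inductively `x` spans `B` modulo every `𝔪ⁿB`,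
and by flatness the coefficients of an element are determined modulo `𝔪ⁿ`. So the `i₀`-th
coefficient is a compatible family of maps `B → R ⧸ 𝔪ⁿ`, whose limit in the complete ring `R`
is the required splitting.
-/

open IsLocalRing

universe u

open Submodule in
theorem Submodule.sup_pow_smul_top_eq_top {R M : Type*} [CommRing R] [AddCommGroup M] [Module R M]
    {I : Ideal R} {N : Submodule R M} (h : N ⊔ I • ⊤ = ⊤) (n : ℕ) : N ⊔ I ^ n • ⊤ = ⊤ := by
  induction n with
  | zero => simp
  | succ n ih =>
    refine eq_top_iff.2 ?_
    calc ⊤ = N ⊔ I ^ n • (N ⊔ I • ⊤) := by rw [h, ih]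
      _ = N ⊔ I ^ n • N ⊔ I ^ (n + 1) • ⊤ := by rw [smul_sup, pow_succ, mul_smul, sup_assoc]
      _ ≤ N ⊔ I ^ (n + 1) • ⊤ := sup_le_sup_right (sup_le le_rfl smul_le_right) _

theorem LinearMap.exists_comp_eq_of_surjective {R F Q P : Type*} [CommRing R]
    [AddCommGroup F] [Module R F] [AddCommGroup Q] [Module R Q] [AddCommGroup P] [Module R P]
    {f : F →ₗ[R] Q} (hf : Function.Surjective f) {g : F →ₗ[R] P} (h : ker f ≤ ker g) :
    ∃ g' : Q →ₗ[R] P, g' ∘ₗ f = g :=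
  ⟨(ker f).liftQ g h ∘ₗ (f.quotKerEquivOfSurjective hf).symm.toLinearMap, by
    ext x
    simp⟩

open Submodule LinearMap in
theorem IsAdicComplete.exists_comp_eq {R F M N : Type*} [CommRing R] [AddCommGroup F] [Module R F]
    [AddCommGroup M] [Module R M] [AddCommGroup N] [Module R N] (I : Ideal R) [IsAdicComplete I N]
    {L : F →ₗ[R] M} {ψ : F →ₗ[R] N} (hL : range L ⊔ I • ⊤ = ⊤)
    (hψ : ∀ n c, L c ∈ (I ^ n • ⊤ : Submodule R M) → ψ c ∈ (I ^ n • ⊤ : Submodule R N)) :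
    ∃ φ : M →ₗ[R] N, φ ∘ₗ L = ψ := by
  have hsurj (n : ℕ) : Function.Surjective ((I ^ n • ⊤ : Submodule R M).mkQ ∘ₗ L) := by
    rw [← range_eq_top, range_comp, Submodule.map_mkQ_eq_top, sup_comm]
    exact sup_pow_smul_top_eq_top hL n
  have hker (n : ℕ) : ker ((I ^ n • ⊤ : Submodule R M).mkQ ∘ₗ L) ≤
      ker ((I ^ n • ⊤ : Submodule R N).mkQ ∘ₗ ψ) := fun c hc ↦ by
    simpa [Quotient.mk_eq_zero] using hψ n c (by simpa [Quotient.mk_eq_zero] using hc)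
  choose g hg using fun n ↦ exists_comp_eq_of_surjective (hsurj n) (hker n)
  have compat {m n : ℕ} (hle : m ≤ n) :
      factorPow I N hle ∘ₗ g n ∘ₗ mkQ _ = g m ∘ₗ mkQ _ := by
    rw [← factor_comp_mk (pow_smul_top_le I M hle), ← comp_assoc, ← comp_assoc]
    congr 1
    refine (cancel_right (hsurj n)).1 ?_
    calc factorPow I N hle ∘ₗ g n ∘ₗ (mkQ _ ∘ₗ L) = factorPow I N hle ∘ₗ mkQ _ ∘ₗ ψ := by
          rw [hg]
      _ = mkQ _ ∘ₗ ψ := by rw [← comp_assoc, factor_comp_mk]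
      _ = g m ∘ₗ factorPow I M hle ∘ₗ (mkQ _ ∘ₗ L) := by
          rw [← comp_assoc L, factor_comp_mk, hg]
  refine ⟨lift I _ compat, DFunLike.coe_injective (IsHausdorff.funext I fun n c ↦ ?_)⟩
  simpa using congr($(hg n) c)

open TensorProduct LinearMap in
theorem Module.Flat.mem_range_rTensor_inclusion {R M : Type*} [CommRing R] [AddCommGroup M]
    [Module R M] [Module.Flat R M] {K J : Ideal R} (hKJ : K ≤ J) {z : J ⊗[R] M}
    (hz : TensorProduct.lid R M (J.subtype.rTensor M z) ∈ K • (⊤ : Submodule R M)) :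
    z ∈ range ((Submodule.inclusion hKJ).rTensor M) := by
  rw [← Ideal.subtype_rTensor_range] at hz
  obtain ⟨w, hw⟩ := hz
  refine ⟨w, (TensorProduct.lid R M).injective.comp
    (rTensor_preserves_injective_linearMap _ J.injective_subtype) ?_⟩
  simp only [Function.comp_apply, ← hw, ← rTensor_comp_apply, Submodule.subtype_comp_inclusion]
  rfl

/- The functional `β : J ⊗ M → R ⧸ I * J`, `a ⊗ b ↦ a * d i b`, vanishes on the image of
`(I * J) ⊗ M` and sends `∑ⱼ cⱼ ⊗ x j` to `c i`; by flatness that tensor lies in this image. -/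
open TensorProduct LinearMap Finsupp in
theorem Module.Flat.coeff_mem_mul {R M ι : Type*} [CommRing R] [AddCommGroup M] [Module R M]
    [Module.Flat R M] {I J : Ideal R} {x : ι → M} {d : ι → M →ₗ[R] R ⧸ I}
    (hd : ∀ i j, d i (x j) = single j 1 i) {c : ι →₀ R} (hcJ : ∀ i, c i ∈ J)
    (hc : linearCombination R x c ∈ (I * J) • (⊤ : Submodule R M)) (i : ι) : c i ∈ I * J := by
  have hIJ : I * J ≤ J := Ideal.mul_le_right
  have hβ : I • (⊤ : Submodule R J) ≤ Submodule.comap J.subtype (I * J) :=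
    Submodule.smul_le.2 fun r hr a _ ↦ Ideal.mul_mem_mul hr a.2
  let β : J ⊗[R] M →ₗ[R] R ⧸ I * J := Submodule.mapQ _ (I * J) J.subtype hβ ∘ₗ
    (tensorQuotEquivQuotSMul J I).toLinearMap ∘ₗ (d i).lTensor J
  have hβ_tmul (a : J) (b : M) (r : R) (hb : d i b = Ideal.Quotient.mk I r) :
      β (a ⊗ₜ b) = Ideal.Quotient.mk (I * J) (r * a) := by
    simp [β, hb]
    rfl
  let z : J ⊗[R] M := ∑ j ∈ c.support, ⟨c j, hcJ j⟩ ⊗ₜ x j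
  obtain ⟨w, hw⟩ : z ∈ range ((Submodule.inclusion hIJ).rTensor M) :=
    mem_range_rTensor_inclusion hIJ (by simpa [z, linearCombination_apply, Finsupp.sum] using hc)
  have hβw : β ∘ₗ (Submodule.inclusion hIJ).rTensor M = 0 := by
    refine TensorProduct.ext' fun a b ↦ ?_
    obtain ⟨r, hr⟩ := Ideal.Quotient.mk_surjective (d i b)
    simp only [comp_apply, rTensor_tmul, LinearMap.zero_apply, hβ_tmul _ _ r hr.symm]
    exact Ideal.Quotient.eq_zero_iff_mem.2 (Ideal.mul_mem_left _ r a.2)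
  have hβz : β z = Ideal.Quotient.mk (I * J) (c i) := by
    rw [map_sum, Finset.sum_eq_single i]
    · simpa using hβ_tmul _ (x i) 1 (by simp [hd])
    · intro j _ hji
      simpa using hβ_tmul _ (x j) 0 (by simp [hd, hji])
    · intro hi
      rw [show (⟨c i, hcJ i⟩ : J) = 0 from Subtype.ext (Finsupp.notMem_support_iff.1 hi),
        zero_tmul, map_zero]
  rw [← Ideal.Quotient.eq_zero_iff_mem, ← hβz, ← hw, ← comp_apply, hβw, LinearMap.zero_apply]

open Finsupp in
theorem Module.Flat.coeff_mem_pow {R M ι : Type*} [CommRing R] [AddCommGroup M] [Module R M]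
    [Module.Flat R M] {I : Ideal R} {x : ι → M} {d : ι → M →ₗ[R] R ⧸ I}
    (hd : ∀ i j, d i (x j) = single j 1 i) {n : ℕ} {c : ι →₀ R}
    (hc : linearCombination R x c ∈ I ^ n • (⊤ : Submodule R M)) (i : ι) : c i ∈ I ^ n := by
  induction n generalizing i with
  | zero => simp
  | succ n ih =>
    rw [pow_succ'] at hc ⊢
    have hcn (j : ι) : c j ∈ I ^ n := ih (Submodule.smul_mono_left Ideal.mul_le_right hc) j
    exact coeff_mem_mul hd hcn hc i

open Submodule Finsupp in
theorem exists_lift_basis_of_notMem_smul_top {R : Type*} {M : Type u} [CommRing R]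
    [AddCommGroup M] [Module R M] (I : Ideal R) [I.IsMaximal] {v : M}
    (hv : v ∉ I • (⊤ : Submodule R M)) :
    ∃ (ι : Type u) (x : ι → M) (d : ι → M →ₗ[R] R ⧸ I) (i₀ : ι), x i₀ = v ∧
      span R (Set.range x) ⊔ I • ⊤ = ⊤ ∧ ∀ i j, d i (x j) = single j 1 i := by
  classical
  let := Ideal.Quotient.field I
  let π := (I • ⊤ : Submodule R M).mkQ
  have hv' : LinearIndepOn (R ⧸ I) id {π v} :=
    (linearIndepOn_singleton_iff (R ⧸ I)).2 (by simpa [π, Quotient.mk_eq_zero] using hv)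
  let b := Module.Basis.extend hv'
  let s : _ → M := Function.update (Function.surjInv (mkQ_surjective _)) (π v) v
  have hs (w) : π (s w) = w := by
    rcases eq_or_ne w (π v) with rfl | h
    · simp [s]
    · simp only [s, Function.update_of_ne h]
      exact Function.surjInv_eq (mkQ_surjective _) w
  refine ⟨hv'.extend (Set.subset_univ _), fun i ↦ s i, fun i ↦ (b.coord i).restrictScalars R ∘ₗ π,
    ⟨π v, Module.Basis.subset_extend _ rfl⟩, by simp [s], ?_, fun i j ↦ ?_⟩
  · have hπx : π ∘ (fun i : hv'.extend (Set.subset_univ _) ↦ s i) = Subtype.val :=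
      funext fun i ↦ hs i
    rw [sup_comm, ← Submodule.map_mkQ_eq_top, map_span, ← Set.range_comp]
    change span R (Set.range (π ∘ _)) = ⊤
    rw [hπx, Subtype.range_coe, ← restrictScalars_span R (R ⧸ I) Ideal.Quotient.mk_surjective,
      restrictScalars_eq_top_iff]
    simpa [b, Module.Basis.coe_extend] using b.span_eq
  · rw [← b.repr_self j]
    simp [hs, b, Module.Basis.coord_apply, Module.Basis.extend_apply_self]

theorem Module.FaithfullyFlat.one_notMem_smul_top {R B : Type*} [CommRing R] [CommRing B]
    [Algebra R B] [Module.FaithfullyFlat R B] {I : Ideal R} (hI : I ≠ ⊤) :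
    (1 : B) ∉ I • (⊤ : Submodule R B) := by
  rw [Ideal.smul_top_eq_map]
  intro h
  have := I.comap_map_eq_self_of_faithfullyFlat (B := B)
  rw [(Ideal.eq_top_iff_one _).2 h, Ideal.comap_top] at this
  exact hI this.symm

open Finsupp in
theorem stmt13_general {R : Type*} [CommRing R] [IsLocalRing R]
    [IsAdicComplete (maximalIdeal R) R]
    (B : Type*) [CommRing B] [Algebra R B] [Module.FaithfullyFlat R B] :
    ∃ φ : B →ₗ[R] R, φ 1 = 1 := by
  obtain ⟨ι, x, d, i₀, hx₀, hspan, hd⟩ := exists_lift_basis_of_notMem_smul_top (maximalIdeal R)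
    (Module.FaithfullyFlat.one_notMem_smul_top (B := B) (maximalIdeal.isMaximal R).ne_top)
  obtain ⟨φ, hφ⟩ := IsAdicComplete.exists_comp_eq (maximalIdeal R)
    (L := linearCombination R x) (ψ := lapply i₀) (by rwa [range_linearCombination])
    fun n c hc ↦ by simpa using Module.Flat.coeff_mem_pow hd hc i₀
  refine ⟨φ, ?_⟩
  simpa [hx₀] using congr($hφ (single i₀ 1))

/-- If `(R, m)` is a complete Noetherian local ring and `B` is a
faithfully flat `R`-algebra, then `R → B` splits as a map of `R`-modules. -/
theorem stmt13 {R : Type*} [CommRing R] [IsNoetherianRing R] [IsLocalRing R]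
    [IsAdicComplete (maximalIdeal R) R]
    (B : Type*) [CommRing B] [Algebra R B] [Module.FaithfullyFlat R B] :
    ∃ φ : B →ₗ[R] R, φ 1 = 1 :=
  stmt13_general B
end
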